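/- Let κ > 0, η : ℤ → [0, κ], ℓ ∈ ℕ, ℓ ≥ 1, and let g : ℝ → ℝ be uniformly continuous on ℝ with modulus of continuity ω. Then for every N ≥ 1 and x ∈ ℤ, |(1/N) Σ_{x ∈ ℤ, |x| ≤ RN} g(x/N) (η(x) - η^ℓ(x))| ≤ κ(2R+1)·ω(ℓ/N) + 4κ‖g‖_∞ ℓ/N, where η^ℓ(x) = (1/(2ℓ+1)) Σ_{|z| ≤ ℓ} η(x+z), showing the block-average replacement error for linear functionals vanishes as ℓ/N → 0. -/

import Mathlib

lemma sdiff_Icc_card_le (a b c d : ℤ) :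
    (Finset.Icc a b \ Finset.Icc c d).card ≤ (c - a).toNat + (b - d).toNat := by
  have hsub : Finset.Icc a b \ Finset.Icc c d ⊆ Finset.Icc a (c-1) ∪ Finset.Icc (d+1) b := by
    intro x hx
    simp only [Finset.mem_sdiff, Finset.mem_Icc, Finset.mem_union, not_and_or, not_le] at hx ⊢
    omega
  calc (Finset.Icc a b \ Finset.Icc c d).card ≤ _ := Finset.card_le_card hsub
    _ ≤ (Finset.Icc a (c-1)).card + (Finset.Icc (d+1) b).card := Finset.card_union_le _ _
    _ ≤ (c - a).toNat + (b - d).toNat := by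
        rw [Int.card_Icc, Int.card_Icc]; omega

open scoped Classical in
theorem stmt19 (κ R Gnorm : ℝ) (hκ : 0 < κ) (hR : 0 < R)
    (η : ℤ → ℝ) (hη : ∀ x, η x ∈ Set.Icc 0 κ)
    (ℓ N : ℕ) (hℓ : 1 ≤ ℓ) (hN : 1 ≤ N)
    (g : ℝ → ℝ) (ω : ℝ → ℝ)
    (hgb : ∀ x, |g x| ≤ Gnorm)
    (hω0 : ∀ t, 0 ≤ ω t) (hωmono : ∀ s t : ℝ, s ≤ t → ω s ≤ ω t)
    (hmod : ∀ u v : ℝ, |g u - g v| ≤ ω |u - v|)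
    (ηl : ℤ → ℝ)
    (hηl : ∀ z : ℤ, ηl z = (1 / (2 * (ℓ : ℝ) + 1)) * ∑ w ∈ Finset.Icc (-(ℓ:ℤ)) ℓ, η (z + w)) :
    |(1 / (N : ℝ)) *
        ∑' x : ℤ, (if |(x : ℝ)| ≤ R * N then g ((x : ℝ) / N) * (η x - ηl x) else 0)|
      ≤ κ * (2 * R + 1) * ω ((ℓ : ℝ) / N) + 4 * κ * Gnorm * ℓ / N := by
  have hN0 : (0:ℝ) < N := by exact_mod_cast Nat.lt_of_lt_of_le Nat.zero_lt_one hN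
  have hN1 : (1:ℝ) ≤ N := by exact_mod_cast hN
  have hG0 : 0 ≤ Gnorm := (abs_nonneg _).trans (hgb 0)
  set m : ℤ := ⌊R * N⌋ with hm
  have hm0 : 0 ≤ m := Int.le_floor.mpr (by push_cast; positivity)
  have hmRN : (m : ℝ) ≤ R * N := Int.floor_le _
  set I : Finset ℤ := Finset.Icc (-m) m with hI
  set W : Finset ℤ := Finset.Icc (-(ℓ:ℤ)) ℓ with hW
  -- the tsum is a finite sum over I
  have hsupp : ∀ x : ℤ, x ∉ I →
      (if |(x : ℝ)| ≤ R * N then g ((x : ℝ) / N) * (η x - ηl x) else 0) = 0 := by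
    intro x hx
    rw [if_neg]
    intro habs
    apply hx
    rw [hI, Finset.mem_Icc]
    rw [abs_le] at habs
    constructor
    · have : (-x : ℤ) ≤ m := Int.le_floor.mpr (by push_cast; linarith [habs.1])
      omega
    · exact Int.le_floor.mpr habs.2
  rw [tsum_eq_sum hsupp]
  have hcond : ∀ x ∈ I, |(x : ℝ)| ≤ R * N := by
    intro x hx
    rw [hI, Finset.mem_Icc] at hx
    rw [abs_le]
    constructor
    · have : ((-m : ℤ) : ℝ) ≤ (x : ℝ) := by exact_mod_cast hx.1
      push_cast at this; linarith
    · have : (x : ℝ) ≤ (m : ℝ) := by exact_mod_cast hx.2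
      linarith
  rw [Finset.sum_congr rfl (fun x hx => if_pos (hcond x hx))]
  -- expand ηl
  have hcardW : (W.card : ℝ) = 2 * (ℓ : ℝ) + 1 := by
    rw [hW, Int.card_Icc]
    have : ((ℓ:ℤ) + 1 - -(ℓ:ℤ)).toNat = 2*ℓ+1 := by omega
    rw [this]; push_cast; ring
  have hc0 : (0:ℝ) < 2 * (ℓ : ℝ) + 1 := by positivity
  have hexpand : ∀ x : ℤ, g ((x : ℝ) / N) * (η x - ηl x)
      = (1 / (2 * (ℓ : ℝ) + 1)) * ∑ w ∈ W, g ((x : ℝ) / N) * (η x - η (x + w)) := by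
    intro x
    have hs : ∑ w ∈ W, g ((x : ℝ) / N) * (η x - η (x + w))
        = g ((x : ℝ) / N) * ((2 * (ℓ:ℝ) + 1) * η x - ∑ w ∈ W, η (x + w)) := by
      rw [← Finset.mul_sum, Finset.sum_sub_distrib, Finset.sum_const, nsmul_eq_mul, hcardW]
    have hone : (2*(ℓ:ℝ)+1) * (1/(2*(ℓ:ℝ)+1)) = 1 := by
      rw [mul_one_div, div_self hc0.ne']
    rw [hs, hηl x]
    linear_combination (-(g ((x:ℝ)/N) * η x)) * hone
  rw [Finset.sum_congr rfl (fun x _ => hexpand x), ← Finset.mul_sum, Finset.sum_comm]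
  set B : ℝ := (2 * (m:ℝ) + 1) * (ω ((ℓ:ℝ)/N) * κ) + 2 * (ℓ:ℝ) * (Gnorm * κ) with hB
  have hηb : ∀ x : ℤ, |η x| ≤ κ := fun x =>
    abs_le.mpr ⟨by linarith [(hη x).1], (hη x).2⟩
  -- bound each shifted sum
  have hTw : ∀ w ∈ W, |∑ x ∈ I, g ((x:ℝ) / N) * (η x - η (x + w))| ≤ B := by
    intro w hw
    rw [hW, Finset.mem_Icc] at hw
    set J : Finset ℤ := Finset.Icc (-m + w) (m + w) with hJ
    have hreindex : ∑ x ∈ I, g ((x:ℝ) / N) * η (x + w)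
        = ∑ y ∈ J, g (((y:ℝ) - (w:ℝ)) / N) * η y := by
      rw [hJ, ← Finset.map_add_right_Icc, Finset.sum_map, ← hI]
      apply Finset.sum_congr rfl
      intro x _
      have hcast : ((x + w : ℤ) : ℝ) - (w:ℝ) = (x:ℝ) := by push_cast; ring
      rw [addRightEmbedding_apply, hcast]
    have h1 : ∑ x ∈ I, g ((x:ℝ) / N) * (η x - η (x + w))
        = ∑ x ∈ I, g ((x:ℝ)/N) * η x - ∑ y ∈ J, g (((y:ℝ) - w)/N) * η y := by
      simp only [mul_sub, Finset.sum_sub_distrib]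
      rw [hreindex]
    have e1 := Finset.sum_inter_add_sum_sdiff I J (fun x : ℤ => g ((x:ℝ)/N) * η x)
    have e2' := Finset.sum_inter_add_sum_sdiff J I (fun y : ℤ => g (((y:ℝ) - w)/N) * η y)
    rw [Finset.inter_comm J I] at e2'
    have e3 : ∑ x ∈ I ∩ J, g ((x:ℝ)/N) * η x - ∑ x ∈ I ∩ J, g (((x:ℝ) - w)/N) * η x
        = ∑ x ∈ I ∩ J, (g ((x:ℝ)/N) - g (((x:ℝ) - w)/N)) * η x := by
      rw [← Finset.sum_sub_distrib]
      exact Finset.sum_congr rfl (fun x _ => by ring)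
    have hsplit : ∑ x ∈ I, g ((x:ℝ) / N) * (η x - η (x + w))
        = (∑ x ∈ I ∩ J, (g ((x:ℝ)/N) - g (((x:ℝ) - w)/N)) * η x)
          + (∑ x ∈ I \ J, g ((x:ℝ)/N) * η x)
          - (∑ y ∈ J \ I, g (((y:ℝ) - w)/N) * η y) := by
      rw [h1]; linear_combination e3 - e1 + e2'
    rw [hsplit]
    -- bulk term
    have hwabs : |(w:ℝ)| ≤ (ℓ:ℝ) := by
      have : |w| ≤ (ℓ:ℤ) := abs_le.mpr hw
      calc |(w:ℝ)| = ((|w| : ℤ) : ℝ) := by rw [Int.cast_abs]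
        _ ≤ ((ℓ:ℤ) : ℝ) := by exact_mod_cast this
        _ = (ℓ:ℝ) := by push_cast; rfl
    have hbulk : |∑ x ∈ I ∩ J, (g ((x:ℝ)/N) - g (((x:ℝ) - w)/N)) * η x|
        ≤ (2 * (m:ℝ) + 1) * (ω ((ℓ:ℝ)/N) * κ) := by
      calc |∑ x ∈ I ∩ J, (g ((x:ℝ)/N) - g (((x:ℝ) - w)/N)) * η x|
          ≤ ∑ x ∈ I ∩ J, |(g ((x:ℝ)/N) - g (((x:ℝ) - w)/N)) * η x| :=
            Finset.abs_sum_le_sum_abs _ _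
        _ ≤ (I ∩ J).card • (ω ((ℓ:ℝ)/N) * κ) := by
            apply Finset.sum_le_card_nsmul
            intro x _
            rw [abs_mul]
            refine mul_le_mul ?_ (hηb x) (abs_nonneg _) (hω0 _)
            calc |g ((x:ℝ)/N) - g (((x:ℝ) - w)/N)| ≤ ω |(x:ℝ)/N - ((x:ℝ) - w)/N| :=
                  hmod _ _
              _ ≤ ω ((ℓ:ℝ)/N) := by
                  apply hωmono
                  have hx1 : (x:ℝ)/N - ((x:ℝ) - w)/N = (w:ℝ)/N := by field_simp; ring
                  rw [hx1, abs_div, abs_of_pos hN0]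
                  exact div_le_div_of_nonneg_right hwabs hN0.le
        _ ≤ (2 * (m:ℝ) + 1) * (ω ((ℓ:ℝ)/N) * κ) := by
            rw [nsmul_eq_mul]
            apply mul_le_mul_of_nonneg_right _ (mul_nonneg (hω0 _) hκ.le)
            have h1 : (I ∩ J).card ≤ I.card := Finset.card_le_card Finset.inter_subset_left
            have h2 : I.card = (2 * m + 1).toNat := by rw [hI, Int.card_Icc]; omega
            have h3 : ((I ∩ J).card : ℝ) ≤ ((2 * m + 1).toNat : ℝ) := by
              exact_mod_cast h2 ▸ h1
            refine h3.trans (le_of_eq ?_)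
            have h4 : ((2 * m + 1).toNat : ℤ) = 2 * m + 1 := Int.toNat_of_nonneg (by omega)
            calc (((2 * m + 1).toNat : ℕ) : ℝ) = ((((2 * m + 1).toNat : ℕ) : ℤ) : ℝ) := by
                  norm_cast
              _ = (((2 * m + 1) : ℤ) : ℝ) := by rw [h4]
              _ = 2 * (m:ℝ) + 1 := by push_cast; ring
    -- boundary terms
    have hbd : ∀ (s : Finset ℤ) (f : ℤ → ℝ), s.card ≤ ℓ → (∀ x ∈ s, |f x| ≤ Gnorm * κ) →
        |∑ x ∈ s, f x| ≤ (ℓ:ℝ) * (Gnorm * κ) := by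
      intro s f hcard hf
      calc |∑ x ∈ s, f x| ≤ ∑ x ∈ s, |f x| := Finset.abs_sum_le_sum_abs _ _
        _ ≤ s.card • (Gnorm * κ) := Finset.sum_le_card_nsmul _ _ _ hf
        _ ≤ (ℓ:ℝ) * (Gnorm * κ) := by
            rw [nsmul_eq_mul]
            apply mul_le_mul_of_nonneg_right _ (mul_nonneg hG0 hκ.le)
            exact_mod_cast hcard
    have hb1 : |∑ x ∈ I \ J, g ((x:ℝ)/N) * η x| ≤ (ℓ:ℝ) * (Gnorm * κ) := by
      apply hbd
      · calc (I \ J).card ≤ ((-m + w) - (-m)).toNat + (m - (m + w)).toNat :=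
            sdiff_Icc_card_le _ _ _ _
          _ ≤ ℓ := by omega
      · intro x _
        rw [abs_mul]
        exact mul_le_mul (hgb _) (hηb x) (abs_nonneg _) hG0
    have hb2 : |∑ y ∈ J \ I, g (((y:ℝ) - w)/N) * η y| ≤ (ℓ:ℝ) * (Gnorm * κ) := by
      apply hbd
      · calc (J \ I).card ≤ ((-m) - (-m + w)).toNat + ((m + w) - m).toNat :=
            sdiff_Icc_card_le _ _ _ _
          _ ≤ ℓ := by omega
      · intro y _
        rw [abs_mul]
        exact mul_le_mul (hgb _) (hηb y) (abs_nonneg _) hG0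
    have hA := abs_le.mp hbulk
    have hB1 := abs_le.mp hb1
    have hB2 := abs_le.mp hb2
    rw [hB]
    exact abs_le.mpr ⟨by linarith, by linarith⟩
  -- assemble
  have hS : |∑ w ∈ W, ∑ x ∈ I, g ((x:ℝ)/N) * (η x - η (x + w))| ≤ (2*(ℓ:ℝ)+1) * B := by
    calc |∑ w ∈ W, ∑ x ∈ I, g ((x:ℝ)/N) * (η x - η (x + w))|
        ≤ ∑ w ∈ W, |∑ x ∈ I, g ((x:ℝ)/N) * (η x - η (x + w))| :=
          Finset.abs_sum_le_sum_abs _ _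
      _ ≤ W.card • B := Finset.sum_le_card_nsmul _ _ _ hTw
      _ = (2*(ℓ:ℝ)+1) * B := by rw [nsmul_eq_mul, hcardW]
  have hB0 : 0 ≤ B := by
    rw [hB]
    have hm' : (0:ℝ) ≤ (m:ℝ) := by exact_mod_cast hm0
    have h1 : (0:ℝ) ≤ (2*(m:ℝ)+1) * (ω ((ℓ:ℝ)/N) * κ) :=
      mul_nonneg (by linarith) (mul_nonneg (hω0 _) hκ.le)
    have h2 : (0:ℝ) ≤ 2*(ℓ:ℝ)*(Gnorm*κ) :=
      mul_nonneg (by positivity) (mul_nonneg hG0 hκ.le)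
    linarith
  calc |(1/(N:ℝ)) * ((1/(2*(ℓ:ℝ)+1)) * ∑ w ∈ W, ∑ x ∈ I, g ((x:ℝ)/N) * (η x - η (x + w)))|
      = (1/(N:ℝ)) * ((1/(2*(ℓ:ℝ)+1)) * |∑ w ∈ W, ∑ x ∈ I, g ((x:ℝ)/N) * (η x - η (x + w))|) := by
        rw [abs_mul, abs_mul, abs_of_pos (by positivity : (0:ℝ) < 1/(N:ℝ)),
          abs_of_pos (by positivity : (0:ℝ) < 1/(2*(ℓ:ℝ)+1))]
    _ ≤ (1/(N:ℝ)) * ((1/(2*(ℓ:ℝ)+1)) * ((2*(ℓ:ℝ)+1) * B)) := by gcongr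
    _ = B / N := by field_simp
    _ ≤ κ * (2 * R + 1) * ω ((ℓ : ℝ) / N) + 4 * κ * Gnorm * ℓ / N := by
        rw [hB, add_div]
        have hωnn := hω0 ((ℓ:ℝ)/N)
        have t1 : (2*(m:ℝ)+1) * (ω ((ℓ:ℝ)/N) * κ) / N ≤ κ * (2*R+1) * ω ((ℓ:ℝ)/N) := by
          rw [div_le_iff₀ hN0]
          have h1 : 2*(m:ℝ)+1 ≤ (2*R+1) * N := by nlinarith
          nlinarith [mul_nonneg hωnn hκ.le]
        have t2 : 2*(ℓ:ℝ)*(Gnorm*κ) / N ≤ 4 * κ * Gnorm * ℓ / N := by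
          rw [div_le_div_iff₀ hN0 hN0]
          have hl0 : (0:ℝ) ≤ (ℓ:ℝ) := by positivity
          nlinarith [mul_nonneg (mul_nonneg hl0 hG0) hκ.le]
        linarith
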